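/- arXiv:2509.07350 — 5 statements merged into one kernel-verified Lean document; each statement's English description precedes it below -/
import Mathlib

section
/- Let q ∈ ℂ with |q| = 1 and let (a_n) be a sequence in the open unit disc 𝔻 with a_n → q. Then the Möbius transformations z ↦ (z − a_n)/(1 − conj(a_n)·z) converge to the constant function −q uniformly on every compact subset of ℂ ∖ {q} (in particular, for each such compact set, for all sufficiently large n the map has no pole on it). If moreover q ≠ 1, then the normalized maps z ↦ ((1 − conj(a_n))/(1 − a_n)) · (z − a_n)/(1 − conj(a_n)·z) converge to the constant function 1 uniformly on every compact subset of ℂ ∖ {q}. -/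
open Filter Topology ComplexConjugate

/-! Since `q * conj q = 1`, the Möbius map with parameter `q` is the constant `-q` away from `q`,
and its normalization is the constant `1`. Both maps are jointly continuous in the parameter and
the variable at every point of `{q} × K`, and joint continuity along a compact fibre is enough
for uniform convergence on it as the parameter tends to `q`. -/

theorem tendstoUniformlyOn_nhds_of_continuousAt {α β γ : Type*} [TopologicalSpace α]
    [TopologicalSpace β] [UniformSpace γ] {f : α → β → γ} {x : α} {K : Set β}
    (hK : IsCompact K) (hf : ∀ y ∈ K, ContinuousAt ↿f (x, y)) :
    TendstoUniformlyOn f (f x) (𝓝 x) K := by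
  intro u hu
  obtain ⟨t, ht, htu⟩ := comp_mem_uniformity_sets hu
  refine hK.eventually_forall_of_forall_eventually fun y hy => ?_
  have hslice : ContinuousAt (fun p : α × β => f x p.2) (x, y) :=
    ContinuousAt.comp (f := fun p : α × β => (x, p.2)) (x := (x, y)) (hf y hy) (by fun_prop)
  filter_upwards [hslice (mem_nhds_right (f x y) ht), hf y hy (mem_nhds_left (f x y) ht)]
    with p hxp hpy
  exact htu ⟨f x y, hxp, hpy⟩

noncomputable def mobius (w z : ℂ) : ℂ := (z - w) / (1 - conj w * z)

noncomputable def normalizedMobius (w z : ℂ) : ℂ := (1 - conj w) / (1 - w) * mobius w z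

lemma continuousAt_mobius {w z : ℂ} (h : 1 - conj w * z ≠ 0) :
    ContinuousAt ↿mobius (w, z) := by
  unfold mobius
  fun_prop (disch := assumption)

lemma continuousAt_normalizedMobius {w z : ℂ} (hw : 1 - w ≠ 0) (h : 1 - conj w * z ≠ 0) :
    ContinuousAt ↿normalizedMobius (w, z) := by
  unfold normalizedMobius mobius
  fun_prop (disch := assumption)

lemma mul_conj_of_norm_eq_one {q : ℂ} (hq : ‖q‖ = 1) : q * conj q = 1 := by
  rw [Complex.mul_conj, Complex.normSq_eq_norm_sq, hq]
  norm_num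

lemma one_sub_conj_mul_ne_zero {q z : ℂ} (hq : ‖q‖ = 1) (hz : z ≠ q) : 1 - conj q * z ≠ 0 := by
  intro h
  exact hz (by linear_combination (-q) * h - z * mul_conj_of_norm_eq_one hq)

lemma mobius_of_norm_eq_one {q z : ℂ} (hq : ‖q‖ = 1) (hz : z ≠ q) : mobius q z = -q := by
  rw [mobius, div_eq_iff (one_sub_conj_mul_ne_zero hq hz)]
  linear_combination (-z) * mul_conj_of_norm_eq_one hq

lemma normalizedMobius_of_norm_eq_one {q z : ℂ} (hq : ‖q‖ = 1) (hq1 : q ≠ 1) (hz : z ≠ q) :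
    normalizedMobius q z = 1 := by
  have h1q : 1 - q ≠ 0 := sub_ne_zero.mpr hq1.symm
  rw [normalizedMobius, mobius_of_norm_eq_one hq hz, div_mul_eq_mul_div, div_eq_one_iff_eq h1q]
  linear_combination mul_conj_of_norm_eq_one hq

theorem stmt0_general (q : ℂ) (hq : ‖q‖ = 1) (a : ℕ → ℂ)
    (haq : Tendsto a atTop (nhds q)) :
    (∀ K : Set ℂ, IsCompact K → K ⊆ {q}ᶜ →
      (∀ᶠ n in atTop, ∀ z ∈ K, 1 - (starRingEnd ℂ) (a n) * z ≠ 0) ∧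
      TendstoUniformlyOn (fun n z => (z - a n) / (1 - (starRingEnd ℂ) (a n) * z))
        (fun _ => -q) atTop K) ∧
    (q ≠ 1 → ∀ K : Set ℂ, IsCompact K → K ⊆ {q}ᶜ →
      TendstoUniformlyOn
        (fun n z => ((1 - (starRingEnd ℂ) (a n)) / (1 - a n)) *
          ((z - a n) / (1 - (starRingEnd ℂ) (a n) * z)))
        (fun _ => 1) atTop K) := by
  have hden : ∀ z ≠ q, 1 - conj q * z ≠ 0 := fun z => one_sub_conj_mul_ne_zero hq
  refine ⟨fun K hK hKq => ⟨?_, ?_⟩, fun hq1 K hK hKq => ?_⟩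
  · refine haq.eventually (hK.eventually_forall_of_forall_eventually
      (P := fun w z => 1 - conj w * z ≠ 0) fun z hz => ?_)
    have : Continuous fun p : ℂ × ℂ => 1 - conj p.1 * p.2 := by fun_prop
    exact this.continuousAt.eventually_ne (hden z (hKq hz))
  · refine ((tendstoUniformlyOn_nhds_of_continuousAt hK fun z hz =>
      continuousAt_mobius (hden z (hKq hz))).seq_tendstoUniformlyOn a haq).congr_right ?_
    exact fun z hz => mobius_of_norm_eq_one hq (hKq hz)
  · refine ((tendstoUniformlyOn_nhds_of_continuousAt hK fun z hz =>
      continuousAt_normalizedMobius (sub_ne_zero.mpr (Ne.symm hq1)) (hden z (hKq hz))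
      ).seq_tendstoUniformlyOn a haq).congr_right ?_
    exact fun z hz => normalizedMobius_of_norm_eq_one hq hq1 (hKq hz)

/-- Let `q ∈ ℂ` with `|q| = 1` and let `(a n)` be a sequence in the open unit
disc with `a n → q`. Then the Möbius transformations `z ↦ (z − a n)/(1 − conj (a n)·z)`
converge to the constant `−q` uniformly on every compact subset of `ℂ \ {q}` (in particular,
eventually there is no pole on such a compact set).  If moreover `q ≠ 1`, the normalized maps
`z ↦ ((1 − conj (a n))/(1 − a n)) · (z − a n)/(1 − conj (a n)·z)` converge uniformly on every
such compact set to the constant `1`. -/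
theorem stmt0 (q : ℂ) (hq : ‖q‖ = 1) (a : ℕ → ℂ) (ha : ∀ n, ‖a n‖ < 1)
    (haq : Tendsto a atTop (nhds q)) :
    (∀ K : Set ℂ, IsCompact K → K ⊆ {q}ᶜ →
      (∀ᶠ n in atTop, ∀ z ∈ K, 1 - (starRingEnd ℂ) (a n) * z ≠ 0) ∧
      TendstoUniformlyOn (fun n z => (z - a n) / (1 - (starRingEnd ℂ) (a n) * z))
        (fun _ => -q) atTop K) ∧
    (q ≠ 1 → ∀ K : Set ℂ, IsCompact K → K ⊆ {q}ᶜ →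
      TendstoUniformlyOn
        (fun n z => ((1 - (starRingEnd ℂ) (a n)) / (1 - a n)) *
          ((z - a n) / (1 - (starRingEnd ℂ) (a n) * z)))
        (fun _ => 1) atTop K) :=
  stmt0_general q hq a haq
end

section
/- In the degenerating setup, assume that none of q_{d₁+1}, …, q_e equals 1. Then for every compact set K ⊆ ℂ that is disjoint from {q_{d₁+1}, …, q_e} and from the poles of B (the points 1/conj(a_k) for 1 ≤ k ≤ d₁ with a_k ≠ 0), there is N such that for all n ≥ N the function B_n has no pole on K, and B_n converges to B uniformly on K as n → ∞. -/
/-!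
The Blaschke product `blaschke m a z` is jointly continuous in `(a, z)` wherever no zero `a k`
equals `1` and no denominator `1 - conj (a k) * z` vanishes. At `(q, z)` with `z ∈ K` this holds,
so by compactness of `K` it holds on `V × K` for a neighbourhood `V` of `q`; continuity on the
compact set then makes `blaschke m (A n) → blaschke m q` uniformly on `K`. Finally each factor with
a unimodular zero `q k ≠ 1` is identically `1` away from `q k`, so `blaschke m q = B` on `K`.
-/

open Filter

/-- The Blaschke product with exponent `m` and zero list `a : Fin e → ℂ`:
`B(z) = z^m · ∏ k, ((1 − conj (a k))/(1 − a k)) · ((z − a k)/(1 − conj (a k)·z))`. -/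
noncomputable def blaschke (m : ℕ) {e : ℕ} (a : Fin e → ℂ) (z : ℂ) : ℂ :=
  z ^ m * ∏ k, ((1 - (starRingEnd ℂ) (a k)) / (1 - a k) *
    ((z - a k) / (1 - (starRingEnd ℂ) (a k) * z)))

open Topology

theorem TendstoUniformlyOn.of_continuousOn_prod {α β E ι : Type*} [TopologicalSpace α]
    [TopologicalSpace β] [UniformSpace E] {f : α → β → E} {s : Set α} {k : Set β} {q : α}
    {x : ι → α} {l : Filter ι} (hk : IsCompact k) (hf : ContinuousOn f.uncurry (s ×ˢ k))
    (hs : s ∈ 𝓝 q) (hx : Tendsto x l (𝓝 q)) :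
    TendstoUniformlyOn (fun n => f (x n)) (f q) l k := by
  intro u hu
  obtain ⟨v, hv, hvu⟩ :=
    hk.mem_uniformity_of_prod hf (mem_of_mem_nhds hs) (tendsto_swap_uniformity hu)
  rw [nhdsWithin_eq_nhds.mpr hs] at hv
  exact hx.eventually hv |>.mono fun n hn z hz => hvu _ hn z hz

/-- The Blaschke factor with zero `a`, normalised to take the value `1` at `z = 1`. -/
noncomputable def blaschkeFactor (a z : ℂ) : ℂ :=
  (1 - (starRingEnd ℂ) a) / (1 - a) * ((z - a) / (1 - (starRingEnd ℂ) a * z))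

theorem blaschke_eq_mul_prod (m : ℕ) {e : ℕ} (a : Fin e → ℂ) (z : ℂ) :
    blaschke m a z = z ^ m * ∏ k, blaschkeFactor (a k) z :=
  rfl

theorem conj_mul_self_of_norm_eq_one {w : ℂ} (hw : ‖w‖ = 1) : (starRingEnd ℂ) w * w = 1 := by
  rw [Complex.conj_mul', hw]
  norm_num

theorem one_sub_conj_mul_ne_zero_of_norm_eq_one {w z : ℂ} (hw : ‖w‖ = 1) (hz : z ≠ w) :
    1 - (starRingEnd ℂ) w * z ≠ 0 := by
  have hww := conj_mul_self_of_norm_eq_one hw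
  have hw0 : (starRingEnd ℂ) w ≠ 0 := left_ne_zero_of_mul_eq_one hww
  rw [show 1 - (starRingEnd ℂ) w * z = (starRingEnd ℂ) w * (w - z) by
    linear_combination -hww]
  exact mul_ne_zero hw0 (sub_ne_zero.mpr hz.symm)

theorem blaschkeFactor_eq_one_of_norm_eq_one {w z : ℂ} (hw : ‖w‖ = 1) (hw1 : w ≠ 1)
    (hz : z ≠ w) : blaschkeFactor w z = 1 := by
  have hww := conj_mul_self_of_norm_eq_one hw
  have hden := one_sub_conj_mul_ne_zero_of_norm_eq_one hw hz
  have hw1' : (1 : ℂ) - w ≠ 0 := sub_ne_zero.mpr hw1.symm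
  rw [blaschkeFactor]
  field_simp
  linear_combination (1 - z) * hww

theorem blaschke_castLE_of_blaschkeFactor_eq_one (m : ℕ) {d e : ℕ} (hde : d ≤ e)
    (a : Fin e → ℂ) {z : ℂ} (ha : ∀ k : Fin e, d ≤ (k : ℕ) → blaschkeFactor (a k) z = 1) :
    blaschke m (fun k : Fin d => a (Fin.castLE hde k)) z = blaschke m a z := by
  rw [blaschke_eq_mul_prod, blaschke_eq_mul_prod]
  congr 1
  refine (Finset.prod_map Finset.univ (Fin.castLEEmb hde) _).symm.trans
    (Finset.prod_subset (Finset.subset_univ _) fun k _ hk => ha k ?_)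
  by_contra! hkd
  exact hk (Finset.mem_map.mpr ⟨⟨k, hkd⟩, Finset.mem_univ _, rfl⟩)

def blaschkeDomain (e : ℕ) : Set ((Fin e → ℂ) × ℂ) :=
  {p | ∀ k, p.1 k ≠ 1 ∧ 1 - (starRingEnd ℂ) (p.1 k) * p.2 ≠ 0}

theorem isOpen_blaschkeDomain (e : ℕ) : IsOpen (blaschkeDomain e) := by
  simp only [blaschkeDomain, Set.ofPred_forall]
  exact isOpen_iInter_of_finite fun k =>
    (isOpen_ne_fun (by fun_prop) continuous_const).inter
      (isOpen_ne_fun (by fun_prop) continuous_const)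

theorem continuousOn_blaschke_uncurry (m e : ℕ) :
    ContinuousOn (fun p : (Fin e → ℂ) × ℂ => blaschke m p.1 p.2) (blaschkeDomain e) := by
  simp only [blaschke_eq_mul_prod, blaschkeFactor]
  refine (continuous_snd.pow m).continuousOn.mul (continuousOn_finsetProd _ fun k _ => ?_)
  refine ContinuousOn.mul (ContinuousOn.div (by fun_prop) (by fun_prop) fun p hp => ?_)
    (ContinuousOn.div (by fun_prop) (by fun_prop) fun p hp => (hp k).2)
  exact sub_ne_zero.mpr (hp k).1.symm

theorem stmt1_general (m e d₁ : ℕ) (hd : d₁ < e)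
    (q : Fin e → ℂ)
    (hqin : ∀ k : Fin e, (k : ℕ) < d₁ → ‖q k‖ < 1)
    (hqbd : ∀ k : Fin e, d₁ ≤ (k : ℕ) → ‖q k‖ = 1)
    (A : ℕ → Fin e → ℂ)
    (hAconv : ∀ k, Tendsto (fun n => A n k) atTop (nhds (q k)))
    (hq1 : ∀ k : Fin e, d₁ ≤ (k : ℕ) → q k ≠ 1)
    (K : Set ℂ) (hK : IsCompact K)
    (hKq : ∀ z ∈ K, ∀ k : Fin e, d₁ ≤ (k : ℕ) → z ≠ q k)
    (hKpole : ∀ z ∈ K, ∀ k : Fin e, (k : ℕ) < d₁ → 1 - (starRingEnd ℂ) (q k) * z ≠ 0) :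
    ∃ N : ℕ, (∀ n ≥ N, ∀ z ∈ K, ∀ k : Fin e, 1 - (starRingEnd ℂ) (A n k) * z ≠ 0) ∧
      TendstoUniformlyOn (fun n => blaschke m (A n))
        (blaschke m fun k : Fin d₁ => q (Fin.castLE hd.le k)) atTop K := by
  have hqK : ∀ z ∈ K, (q, z) ∈ blaschkeDomain e := fun z hz k => by
    rcases lt_or_ge (k : ℕ) d₁ with hk | hk
    · exact ⟨fun h => (hqin k hk).ne (by simp [show q k = 1 from h]), hKpole z hz k hk⟩
    · exact ⟨hq1 k hk, one_sub_conj_mul_ne_zero_of_norm_eq_one (hqbd k hk) (hKq z hz k hk)⟩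
  have hnhds : {a | ∀ z ∈ K, (a, z) ∈ blaschkeDomain e} ∈ 𝓝 q :=
    hK.eventually_forall_of_forall_eventually fun z hz =>
      (isOpen_blaschkeDomain e).mem_nhds (hqK z hz)
  have hA : Tendsto A atTop (𝓝 q) := tendsto_pi_nhds.mpr hAconv
  obtain ⟨N, hN⟩ := eventually_atTop.mp (hA.eventually hnhds)
  refine ⟨N, fun n hn z hz k => (hN n hn z hz k).2, ?_⟩
  have hcont : ContinuousOn (fun a z => blaschke m a z).uncurry
      ({a | ∀ z ∈ K, (a, z) ∈ blaschkeDomain e} ×ˢ K) :=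
    (continuousOn_blaschke_uncurry m e).mono fun p hp => hp.1 p.2 hp.2
  refine (TendstoUniformlyOn.of_continuousOn_prod hK hcont hnhds hA).congr_right fun z hz => ?_
  exact (blaschke_castLE_of_blaschkeFactor_eq_one m hd.le q fun k hk =>
    blaschkeFactor_eq_one_of_norm_eq_one (hqbd k hk) (hq1 k hk) (hKq z hz k hk)).symm

/-- In the degenerating setup, if none of the boundary limit points
`q k` (for `d₁ ≤ k`) equals `1`, then for every compact `K ⊆ ℂ` disjoint from these
boundary points and from the poles of `B`, eventually `B n` has no pole on `K` and
`B n → B` uniformly on `K`. -/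
theorem stmt1 (m e d₁ : ℕ) (hm : 1 ≤ m) (he : 1 ≤ e) (hd : d₁ < e)
    (q : Fin e → ℂ)
    (hqin : ∀ k : Fin e, (k : ℕ) < d₁ → ‖q k‖ < 1)
    (hqbd : ∀ k : Fin e, d₁ ≤ (k : ℕ) → ‖q k‖ = 1)
    (A : ℕ → Fin e → ℂ)
    (hA : ∀ n k, ‖A n k‖ < 1)
    (hAconv : ∀ k, Tendsto (fun n => A n k) atTop (nhds (q k)))
    (hq1 : ∀ k : Fin e, d₁ ≤ (k : ℕ) → q k ≠ 1)
    (K : Set ℂ) (hK : IsCompact K)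
    (hKq : ∀ z ∈ K, ∀ k : Fin e, d₁ ≤ (k : ℕ) → z ≠ q k)
    (hKpole : ∀ z ∈ K, ∀ k : Fin e, (k : ℕ) < d₁ → 1 - (starRingEnd ℂ) (q k) * z ≠ 0) :
    ∃ N : ℕ, (∀ n ≥ N, ∀ z ∈ K, ∀ k : Fin e, 1 - (starRingEnd ℂ) (A n k) * z ≠ 0) ∧
      TendstoUniformlyOn (fun n => blaschke m (A n))
        (blaschke m fun k : Fin d₁ => q (Fin.castLE hd.le k)) atTop K :=
  stmt1_general m e d₁ hd q hqin hqbd A hAconv hq1 K hK hKq hKpole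
end

section
/- Let 0 < r < R, A = {z ∈ ℂ : r < |z| < R}, and let f_n : A → ℂ be holomorphic functions converging locally uniformly on A to a holomorphic function f : A → ℂ, with sup_n ∫_A |f_n'(z)|² dλ(z) < ∞. Then the length functions L_{f_n} and L_f are Lebesgue integrable on [0, 2π], and ∫_0^{2π} |L_{f_n}(θ) − L_f(θ)| dθ → 0 as n → ∞. -/
open Filter MeasureTheory
open scoped ENNReal NNReal

/-- The length function `L_g(θ) = ∫_r^R |g'(ρ e^{iθ})| dρ`, valued in `[0,∞]`. -/
noncomputable def lengthFn (r R : ℝ) (g : ℂ → ℂ) (θ : ℝ) : ℝ≥0∞ :=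
  ∫⁻ ρ in Set.Ioo r R, (‖deriv g ((ρ : ℂ) * Complex.exp ((θ : ℂ) * Complex.I))‖₊ : ℝ≥0∞)

open Set Topology Function
open scoped Real

/-! In polar coordinates `dλ = ρ dρ dθ` with `ρ > r` on `A`, so integrating a function of `z`
along the rays and then over `θ` costs at most a factor `r⁻¹` against its integral over `A`.
This gives `∫₀^{2π} L_g ≤ r⁻¹ ∫_A |g'|` and `∫₀^{2π} |L_{f_n} - L_f| ≤ 2 r⁻¹ ∫_A |f_n' - f'|`.
By Weierstrass `f_n' → f'` pointwise on `A`; by Fatou `f'` obeys the same `L²` bound as the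
`f_n'`; and on the finite measure space `A` a sequence that is bounded in `L²` and tends to `0`
pointwise tends to `0` in `L¹`. -/

theorem ENNReal.le_min_add_sq_mul_inv (a t : ℝ≥0∞) : a ≤ min a t + a ^ 2 * t⁻¹ := by
  rcases le_or_gt a t with h | h
  · exact (min_eq_left h).ge.trans le_self_add
  · have : 1 ≤ a / t :=
      (ENNReal.le_div_iff_mul_le (Or.inr h.ne_bot) (Or.inl h.ne_top)).2 (by simpa using h.le)
    calc a ≤ a * (a / t) := le_mul_of_one_le_right' this
      _ = a ^ 2 * t⁻¹ := by rw [sq, mul_assoc, div_eq_mul_inv]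
      _ ≤ min a t + a ^ 2 * t⁻¹ := le_add_self

namespace MeasureTheory

variable {α : Type*} [MeasurableSpace α] {μ : Measure α}

theorem lintegral_le_measure_univ_add_lintegral_sq (f : α → ℝ≥0∞) :
    ∫⁻ x, f x ∂μ ≤ μ univ + ∫⁻ x, f x ^ 2 ∂μ :=
  calc ∫⁻ x, f x ∂μ ≤ ∫⁻ x, (1 + f x ^ 2) ∂μ := lintegral_mono fun x => by
        have h := ENNReal.le_min_add_sq_mul_inv (f x) 1
        rw [inv_one, mul_one] at h
        exact h.trans (by gcongr; exact min_le_right _ _)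
    _ = μ univ + ∫⁻ x, f x ^ 2 ∂μ := by
        rw [lintegral_add_left measurable_const, lintegral_one]

theorem lintegral_le_of_tendsto_of_forall_lintegral_le {ι : Type*} {l : Filter ι} [l.NeBot]
    [l.IsCountablyGenerated] {F : ι → α → ℝ≥0∞} {f : α → ℝ≥0∞} {C : ℝ≥0∞}
    (hF : ∀ i, Measurable (F i)) (hlim : ∀ᵐ x ∂μ, Tendsto (fun i => F i x) l (𝓝 (f x)))
    (hbd : ∀ i, ∫⁻ x, F i x ∂μ ≤ C) : ∫⁻ x, f x ∂μ ≤ C :=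
  calc ∫⁻ x, f x ∂μ = ∫⁻ x, liminf (fun i => F i x) l ∂μ :=
        lintegral_congr_ae (hlim.mono fun _ hx => hx.liminf_eq.symm)
    _ ≤ liminf (fun i => ∫⁻ x, F i x ∂μ) l := lintegral_liminf_le hF
    _ ≤ C := liminf_le_of_frequently_le' (.of_forall hbd)

/-- Truncate at height `t`: `min F t → 0` by dominated convergence, and the rest is at most
`F² / t`. -/
theorem tendsto_lintegral_zero_of_lintegral_sq_le [IsFiniteMeasure μ] {ι : Type*}
    {l : Filter ι} [l.IsCountablyGenerated] {F : ι → α → ℝ≥0∞} {C : ℝ≥0∞}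
    (hF : ∀ i, Measurable (F i)) (hC : C ≠ ∞) (hbd : ∀ i, ∫⁻ x, F i x ^ 2 ∂μ ≤ C)
    (hlim : ∀ᵐ x ∂μ, Tendsto (fun i => F i x) l (𝓝 0)) :
    Tendsto (fun i => ∫⁻ x, F i x ∂μ) l (𝓝 0) := by
  have htrunc (t : ℝ≥0∞) (ht : t ≠ ∞) :
      Tendsto (fun i => ∫⁻ x, min (F i x) t ∂μ) l (𝓝 0) := by
    simpa using tendsto_lintegral_filter_of_dominated_convergence (f := 0) (fun _ => t)
      (.of_forall fun i => (hF i).min measurable_const)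
      (.of_forall fun i => ae_of_all _ fun x => min_le_right _ _)
      (by simpa using ENNReal.mul_ne_top ht (measure_ne_top μ univ))
      (hlim.mono fun x hx => by simpa using hx.min (tendsto_const_nhds (x := t)))
  have hsplit (t : ℝ≥0∞) (i : ι) : ∫⁻ x, F i x ∂μ ≤ ∫⁻ x, min (F i x) t ∂μ + C * t⁻¹ :=
    calc ∫⁻ x, F i x ∂μ ≤ ∫⁻ x, (min (F i x) t + F i x ^ 2 * t⁻¹) ∂μ :=
          lintegral_mono fun x => ENNReal.le_min_add_sq_mul_inv _ _
      _ = ∫⁻ x, min (F i x) t ∂μ + (∫⁻ x, F i x ^ 2 ∂μ) * t⁻¹ := by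
          rw [lintegral_add_left ((hF i).min measurable_const),
            lintegral_mul_const _ ((hF i).pow_const 2)]
      _ ≤ ∫⁻ x, min (F i x) t ∂μ + C * t⁻¹ := by gcongr; exact hbd i
  refine tendsto_order.2 ⟨fun a ha => absurd ha not_lt_zero, fun ε hε => ?_⟩
  obtain ⟨k, hk⟩ : ∃ k : ℕ, C * (k : ℝ≥0∞)⁻¹ < ε :=
    ((ENNReal.Tendsto.const_mul ENNReal.tendsto_inv_nat_nhds_zero (Or.inr hC)).eventually
      (gt_mem_nhds (by simpa using hε))).exists
  have hk' := (htrunc k (ENNReal.natCast_ne_top k)).add_const (C * (k : ℝ≥0∞)⁻¹)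
  rw [zero_add] at hk'
  filter_upwards [(tendsto_order.1 hk').2 ε hk] with i hi using (hsplit k i).trans_lt hi

theorem lintegral_nnnorm_sub_sq_le {E : Type*} [NormedAddCommGroup E] [MeasurableSpace E]
    [OpensMeasurableSpace E] {u : α → E} (v : α → E) (hu : AEMeasurable u μ) :
    ∫⁻ x, (‖u x - v x‖₊ : ℝ≥0∞) ^ 2 ∂μ
      ≤ 2 * (∫⁻ x, (‖u x‖₊ : ℝ≥0∞) ^ 2 ∂μ + ∫⁻ x, (‖v x‖₊ : ℝ≥0∞) ^ 2 ∂μ) := by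
  rw [← lintegral_add_left' (hu.nnnorm.coe_nnreal_ennreal.pow_const 2),
    ← lintegral_const_mul' _ _ ENNReal.ofNat_ne_top]
  refine lintegral_mono fun x => ?_
  have h := (pow_le_pow_left₀ zero_le (nnnorm_sub_le (u x) (v x)) 2).trans add_sq_le
  simpa using ENNReal.coe_le_coe.2 h

end MeasureTheory

theorem Function.Periodic.setLIntegral_Ioo_add_eq {F : ℝ → ℝ≥0∞} {T : ℝ}
    (hF : Periodic F T) (hT : 0 < T) (s t : ℝ) :
    ∫⁻ x in Ioo s (s + T), F x = ∫⁻ x in Ioo t (t + T), F x := by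
  have := Fact.mk hT
  have h (a : ℝ) : ∫⁻ x in Ioo a (a + T), F x = ∫⁻ y : AddCircle T, hF.lift y := by
    rw [setLIntegral_congr Ioo_ae_eq_Ioc, ← AddCircle.lintegral_preimage T a]
    rfl
  rw [h, h]

theorem Complex.polarCoord_symm_eq_ofReal_mul_exp (p : ℝ × ℝ) :
    Complex.polarCoord.symm p = p.1 * Complex.exp (p.2 * Complex.I) := by
  simp [Complex.exp_mul_I]

theorem Complex.norm_ofReal_mul_exp_mul_I {ρ : ℝ} (hρ : 0 ≤ ρ) (θ : ℝ) :
    ‖(ρ : ℂ) * Complex.exp (θ * Complex.I)‖ = ρ := by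
  rw [norm_mul, Complex.norm_exp_ofReal_mul_I, Complex.norm_real, Real.norm_of_nonneg hρ, mul_one]

def annulus (r R : ℝ) : Set ℂ := {z : ℂ | r < ‖z‖ ∧ ‖z‖ < R}

theorem isOpen_annulus (r R : ℝ) : IsOpen (annulus r R) :=
  (isOpen_lt continuous_const continuous_norm).inter (isOpen_lt continuous_norm continuous_const)

theorem volume_annulus_lt_top (r R : ℝ) : volume (annulus r R) < ∞ :=
  (measure_mono fun _ hz => mem_ball_zero_iff.2 hz.2).trans_lt measure_ball_lt_top

theorem ofReal_mul_lintegral_ray_le_setLIntegral_annulus {r : ℝ} (R : ℝ) (hr : 0 < r)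
    {G : ℂ → ℝ≥0∞} (hG : Measurable G) :
    ENNReal.ofReal r * ∫⁻ θ in Ioo 0 (2 * π), ∫⁻ ρ in Ioo r R, G (ρ * Complex.exp (θ * Complex.I))
      ≤ ∫⁻ z in annulus r R, G z := by
  have hper : Periodic (fun θ : ℝ => ∫⁻ ρ in Ioo r R, G (ρ * Complex.exp (θ * Complex.I)))
      (2 * π) := fun θ => by
    simp only [show Complex.exp (↑(θ + 2 * π) * Complex.I) = Complex.exp (θ * Complex.I) by
      push_cast; exact Complex.exp_mul_I_periodic θ]
  have hshift := hper.setLIntegral_Ioo_add_eq Real.two_pi_pos 0 (-π)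
  rw [zero_add, show -π + 2 * π = π by ring] at hshift
  set S := Ioo r R ×ˢ Ioo (-π) π
  calc ENNReal.ofReal r *
        ∫⁻ θ in Ioo 0 (2 * π), ∫⁻ ρ in Ioo r R, G (ρ * Complex.exp (θ * Complex.I))
      = ∫⁻ θ in Ioo (-π) π, ∫⁻ ρ in Ioo r R,
          ENNReal.ofReal r * G (ρ * Complex.exp (θ * Complex.I)) := by
        simp_rw [hshift, lintegral_const_mul' _ _ ENNReal.ofReal_ne_top]
    _ ≤ ∫⁻ θ in Ioo (-π) π, ∫⁻ ρ in Ioo r R,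
          ENNReal.ofReal ρ * G (ρ * Complex.exp (θ * Complex.I)) := by
        refine lintegral_mono fun θ => setLIntegral_mono' measurableSet_Ioo fun ρ hρ => ?_
        gcongr
        exact hρ.1.le
    _ = ∫⁻ p in S, ENNReal.ofReal p.1 * G (p.1 * Complex.exp (p.2 * Complex.I)) := by
        rw [Measure.volume_eq_prod, setLIntegral_prod_symm]
        fun_prop
    _ = ∫⁻ p in S, ENNReal.ofReal p.1 • (annulus r R).indicator G (Complex.polarCoord.symm p) := by
        refine setLIntegral_congr_fun (measurableSet_Ioo.prod measurableSet_Ioo) fun p hp => ?_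
        rw [Complex.polarCoord_symm_eq_ofReal_mul_exp, indicator_of_mem, smul_eq_mul]
        rw [annulus, mem_ofPred_eq, Complex.norm_ofReal_mul_exp_mul_I (hr.trans hp.1.1).le]
        exact hp.1
    _ ≤ ∫⁻ p in polarCoord.target,
          ENNReal.ofReal p.1 • (annulus r R).indicator G (Complex.polarCoord.symm p) :=
        lintegral_mono_set (prod_mono (fun ρ hρ => hr.trans hρ.1) subset_rfl)
    _ = ∫⁻ z in annulus r R, G z := by
        rw [Complex.lintegral_comp_polarCoord_symm,
          lintegral_indicator (isOpen_annulus r R).measurableSet]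

theorem lintegral_lengthFn_lt_top (R : ℝ) {r : ℝ} (hr : 0 < r) {g : ℂ → ℂ}
    (hg : ∫⁻ z in annulus r R, (‖deriv g z‖₊ : ℝ≥0∞) ^ 2 < ∞) :
    ∫⁻ θ in Ioo 0 (2 * π), lengthFn r R g θ < ∞ := by
  refine ENNReal.lt_top_of_mul_ne_top_right ?_ (ENNReal.ofReal_pos.2 hr).ne'
  refine ((ofReal_mul_lintegral_ray_le_setLIntegral_annulus R hr
    (measurable_deriv g).nnnorm.coe_nnreal_ennreal).trans_lt ?_).ne
  calc ∫⁻ z in annulus r R, (‖deriv g z‖₊ : ℝ≥0∞)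
      ≤ volume.restrict (annulus r R) univ + ∫⁻ z in annulus r R, (‖deriv g z‖₊ : ℝ≥0∞) ^ 2 :=
        lintegral_le_measure_univ_add_lintegral_sq _
    _ < ∞ := by
        rw [Measure.restrict_apply_univ]
        exact ENNReal.add_lt_top.2 ⟨volume_annulus_lt_top r R, hg⟩

theorem lengthFn_le_add (r R : ℝ) (g h : ℂ → ℂ) (θ : ℝ) :
    lengthFn r R g θ ≤ lengthFn r R h θ + ∫⁻ ρ in Ioo r R,
      (‖deriv g (ρ * Complex.exp (θ * Complex.I)) - deriv h (ρ * Complex.exp (θ * Complex.I))‖₊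
        : ℝ≥0∞) := by
  rw [lengthFn, lengthFn, ← lintegral_add_left (by fun_prop)]
  exact lintegral_mono fun ρ =>
    (ENNReal.coe_le_coe.2 (nnnorm_le_nnnorm_add_nnnorm_sub' _ _)).trans_eq (ENNReal.coe_add _ _)

theorem lintegral_lengthFn_tsub_add_tsub_le (R : ℝ) {r : ℝ} (hr : 0 < r) (g h : ℂ → ℂ) :
    ∫⁻ θ in Ioo 0 (2 * π), ((lengthFn r R g θ - lengthFn r R h θ) +
        (lengthFn r R h θ - lengthFn r R g θ))
      ≤ 2 * (∫⁻ z in annulus r R, (‖deriv g z - deriv h z‖₊ : ℝ≥0∞)) / ENNReal.ofReal r := by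
  set D : ℝ → ℝ≥0∞ := fun θ => ∫⁻ ρ in Ioo r R,
    (‖deriv g (ρ * Complex.exp (θ * Complex.I)) - deriv h (ρ * Complex.exp (θ * Complex.I))‖₊
      : ℝ≥0∞)
  have hpt (θ : ℝ) : (lengthFn r R g θ - lengthFn r R h θ) +
      (lengthFn r R h θ - lengthFn r R g θ) ≤ 2 * D θ := by
    have hgh := lengthFn_le_add r R g h θ
    have hhg := lengthFn_le_add r R h g θ
    simp_rw [← nnnorm_neg (deriv h _ - _), neg_sub] at hhg
    rw [two_mul]
    exact add_le_add (tsub_le_iff_left.2 hgh) (tsub_le_iff_left.2 hhg)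
  rw [ENNReal.le_div_iff_mul_le (Or.inl (ENNReal.ofReal_pos.2 hr).ne')
    (Or.inl ENNReal.ofReal_ne_top), mul_comm]
  calc ENNReal.ofReal r * ∫⁻ θ in Ioo 0 (2 * π), ((lengthFn r R g θ - lengthFn r R h θ) +
        (lengthFn r R h θ - lengthFn r R g θ))
      ≤ ENNReal.ofReal r * ∫⁻ θ in Ioo 0 (2 * π), 2 * D θ := by gcongr with θ; exact hpt θ
    _ = 2 * (ENNReal.ofReal r * ∫⁻ θ in Ioo 0 (2 * π), D θ) := by
        rw [lintegral_const_mul' _ _ ENNReal.ofNat_ne_top]; ring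
    _ ≤ 2 * ∫⁻ z in annulus r R, (‖deriv g z - deriv h z‖₊ : ℝ≥0∞) := by
        gcongr
        exact ofReal_mul_lintegral_ray_le_setLIntegral_annulus R hr (by fun_prop)

theorem stmt6_general (r R : ℝ) (hr : 0 < r)
    (f : ℕ → ℂ → ℂ) (flim : ℂ → ℂ)
    (hf : ∀ n, DifferentiableOn ℂ (f n) {z : ℂ | r < ‖z‖ ∧ ‖z‖ < R})
    (hconv : TendstoLocallyUniformlyOn f flim atTop {z : ℂ | r < ‖z‖ ∧ ‖z‖ < R})
    (hbound : (⨆ n, ∫⁻ z in {z : ℂ | r < ‖z‖ ∧ ‖z‖ < R},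
        (‖deriv (f n) z‖₊ : ℝ≥0∞) ^ 2) < ⊤) :
    (∀ n, ∫⁻ θ in Set.Ioo (0 : ℝ) (2 * Real.pi), lengthFn r R (f n) θ < ⊤) ∧
    (∫⁻ θ in Set.Ioo (0 : ℝ) (2 * Real.pi), lengthFn r R flim θ < ⊤) ∧
    Tendsto (fun n => ∫⁻ θ in Set.Ioo (0 : ℝ) (2 * Real.pi),
        ((lengthFn r R (f n) θ - lengthFn r R flim θ) +
          (lengthFn r R flim θ - lengthFn r R (f n) θ))) atTop (nhds 0) := by
  set A := annulus r R
  set M := ⨆ n, ∫⁻ z in A, (‖deriv (f n) z‖₊ : ℝ≥0∞) ^ 2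
  have : IsFiniteMeasure (volume.restrict A) :=
    isFiniteMeasure_restrict.2 (volume_annulus_lt_top r R).ne
  have hMn (n : ℕ) : ∫⁻ z in A, (‖deriv (f n) z‖₊ : ℝ≥0∞) ^ 2 ≤ M :=
    le_iSup (fun n => ∫⁻ z in A, (‖deriv (f n) z‖₊ : ℝ≥0∞) ^ 2) n
  have hderiv : ∀ᵐ z ∂volume.restrict A,
      Tendsto (fun n => deriv (f n) z) atTop (𝓝 (deriv flim z)) :=
    (ae_restrict_mem (isOpen_annulus r R).measurableSet).mono fun z hz =>
      (hconv.deriv (.of_forall hf) (isOpen_annulus r R)).tendsto_at hz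
  have hlim : ∫⁻ z in A, (‖deriv flim z‖₊ : ℝ≥0∞) ^ 2 ≤ M :=
    lintegral_le_of_tendsto_of_forall_lintegral_le (fun n => by fun_prop)
      (hderiv.mono fun _ hz => ENNReal.Tendsto.pow (ENNReal.tendsto_coe.2 hz.nnnorm)) hMn
  refine ⟨fun n => lintegral_lengthFn_lt_top R hr ((hMn n).trans_lt hbound),
    lintegral_lengthFn_lt_top R hr (hlim.trans_lt hbound), ?_⟩
  have hdiff : Tendsto (fun n => ∫⁻ z in A, (‖deriv (f n) z - deriv flim z‖₊ : ℝ≥0∞))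
      atTop (𝓝 0) :=
    tendsto_lintegral_zero_of_lintegral_sq_le (C := 2 * (M + M)) (fun n => by fun_prop)
      (by finiteness)
      (fun n => (lintegral_nnnorm_sub_sq_le _ (by fun_prop)).trans (by gcongr; exact hMn n))
      (hderiv.mono fun z hz => by
        simpa using ENNReal.tendsto_coe.2 (hz.sub_const (deriv flim z)).nnnorm)
  refine tendsto_of_tendsto_of_tendsto_of_le_of_le tendsto_const_nhds ?_ (fun n => zero_le)
    fun n => lintegral_lengthFn_tsub_add_tsub_le R hr (f n) flim
  simpa using ENNReal.Tendsto.div_const (ENNReal.Tendsto.const_mul hdiff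
    (Or.inr ENNReal.ofNat_ne_top)) (Or.inr (ENNReal.ofReal_pos.2 hr).ne')

/-- Let `0 < r < R`, `A = {r < |z| < R}`, and let `f n : A → ℂ` be holomorphic
functions converging locally uniformly on `A` to a holomorphic function `f`, with uniformly
bounded `L²`-derivatives. Then the length functions `L_{f n}` and `L_f` are Lebesgue
integrable on `[0,2π]` (i.e. have finite integral) and `∫₀^{2π} |L_{f n} − L_f| dθ → 0`. -/
theorem stmt6 (r R : ℝ) (hr : 0 < r) (hrR : r < R)
    (f : ℕ → ℂ → ℂ) (flim : ℂ → ℂ)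
    (hf : ∀ n, DifferentiableOn ℂ (f n) {z : ℂ | r < ‖z‖ ∧ ‖z‖ < R})
    (hflim : DifferentiableOn ℂ flim {z : ℂ | r < ‖z‖ ∧ ‖z‖ < R})
    (hconv : TendstoLocallyUniformlyOn f flim atTop {z : ℂ | r < ‖z‖ ∧ ‖z‖ < R})
    (hbound : (⨆ n, ∫⁻ z in {z : ℂ | r < ‖z‖ ∧ ‖z‖ < R},
        (‖deriv (f n) z‖₊ : ℝ≥0∞) ^ 2) < ⊤) :
    (∀ n, ∫⁻ θ in Set.Ioo (0 : ℝ) (2 * Real.pi), lengthFn r R (f n) θ < ⊤) ∧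
    (∫⁻ θ in Set.Ioo (0 : ℝ) (2 * Real.pi), lengthFn r R flim θ < ⊤) ∧
    Tendsto (fun n => ∫⁻ θ in Set.Ioo (0 : ℝ) (2 * Real.pi),
        ((lengthFn r R (f n) θ - lengthFn r R flim θ) +
          (lengthFn r R flim θ - lengthFn r R (f n) θ))) atTop (nhds 0) :=
  stmt6_general r R hr f flim hf hconv hbound
end

section
/- Let m ≥ 1 be an integer. Define F_m : ℂ → ℂ by F_m(a) = 2am / ((m−1)|a|² + (m+1) + √(((m−1)|a|² + (m+1))² − 4m²|a|²)). Then F_m restricts to a homeomorphism of the closed unit disc {a ∈ ℂ : |a| ≤ 1} onto itself, and F_m(a) = a for every a with |a| = 1. In particular, for m = 1 this is the map F_1(a) = a/(1 + √(1 − |a|²)). -/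
/-!
`F_m(a) = λ(|a|) a` with `λ(r) = 2m / ((m−1)r² + m + 1 + √(…))` continuous and positive, so
`F_m` is a radial map. A radial map is a homeomorphism of the closed disc as soon as its radial
profile `ψ(r) = r λ(r)` injects `[0, 1]` into itself with `ψ(1) = 1`: it is then a continuous
bijection of a compact Hausdorff space. Injectivity of `ψ` comes from the quadratic equation
`m r (ψ² + 1) = ((m−1)r² + m + 1) ψ`: two instances with the same value `ψ` differ by
`(r₁ − r₂)(m(ψ² + 1) − (m−1)ψ(r₁ + r₂))`, and the second factor is positive.
-/

/-- The map `F_m(a) = 2am / ((m−1)|a|² + (m+1) + √(((m−1)|a|² + (m+1))² − 4m²|a|²))`. -/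
noncomputable def Fm (m : ℕ) (a : ℂ) : ℂ :=
  2 * a * (m : ℂ) /
    (((((m : ℝ) - 1) * ‖a‖ ^ 2 + ((m : ℝ) + 1)) +
      Real.sqrt (((((m : ℝ) - 1) * ‖a‖ ^ 2 + ((m : ℝ) + 1)) ^ 2 -
        4 * (m : ℝ) ^ 2 * ‖a‖ ^ 2)) : ℝ) : ℂ)

open Set

section RadialMap

variable {E : Type*} [NormedAddCommGroup E] [NormedSpace ℝ E] {g : ℝ → ℝ}

theorem norm_radial_smul (hg : ∀ r ∈ Icc (0 : ℝ) 1, 0 < g r) {x : E} (hx : ‖x‖ ≤ 1) :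
    ‖g ‖x‖ • x‖ = ‖x‖ * g ‖x‖ := by
  rw [norm_smul, Real.norm_of_nonneg (hg _ ⟨norm_nonneg x, hx⟩).le, mul_comm]

theorem radial_smul_injOn (hg : ∀ r ∈ Icc (0 : ℝ) 1, 0 < g r)
    (hinj : InjOn (fun r ↦ r * g r) (Icc 0 1)) :
    InjOn (fun x : E ↦ g ‖x‖ • x) {x | ‖x‖ ≤ 1} := by
  intro x hx y hy hxy
  have hnorm : ‖x‖ = ‖y‖ := hinj ⟨norm_nonneg x, hx⟩ ⟨norm_nonneg y, hy⟩ <| by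
    simpa only [norm_radial_smul hg hx, norm_radial_smul hg hy] using congrArg norm hxy
  have hxy' : g ‖x‖ • x = g ‖x‖ • y := by simpa only [hnorm] using hxy
  exact smul_right_injective E (hg _ ⟨norm_nonneg x, hx⟩).ne' hxy'

theorem radial_smul_surjOn (hcont : ContinuousOn g (Icc 0 1)) (hone : g 1 = 1) :
    SurjOn (fun x : E ↦ g ‖x‖ • x) {x | ‖x‖ ≤ 1} {x | ‖x‖ ≤ 1} := by
  intro y (hy : ‖y‖ ≤ 1)
  obtain ⟨r, ⟨hr0, hr1⟩, hr⟩ : ∃ r ∈ Icc (0 : ℝ) 1, r * g r = ‖y‖ :=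
    intermediate_value_Icc zero_le_one (continuousOn_id.mul hcont)
      (by simpa [hone] using And.intro (norm_nonneg y) hy)
  rcases eq_or_ne y 0 with rfl | hy0
  · exact ⟨0, by simp, by simp⟩
  have hny : ‖y‖ ≠ 0 := norm_ne_zero_iff.mpr hy0
  have hnx : ‖(r / ‖y‖) • y‖ = r := by
    rw [norm_smul, Real.norm_of_nonneg (by positivity), div_mul_cancel₀ r hny]
  refine ⟨(r / ‖y‖) • y, hnx.trans_le hr1, ?_⟩
  simp only [hnx, smul_smul]
  rw [← mul_div_assoc, mul_comm, hr, div_self hny, one_smul]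

variable [ProperSpace E]

theorem exists_homeomorph_closedUnitBall_radial (hg : ∀ r ∈ Icc (0 : ℝ) 1, 0 < g r)
    (hcont : Continuous g) (hone : g 1 = 1) (hle : ∀ r ∈ Icc (0 : ℝ) 1, r * g r ≤ 1)
    (hinj : InjOn (fun r ↦ r * g r) (Icc 0 1)) :
    ∃ h : {x : E // ‖x‖ ≤ 1} ≃ₜ {x : E // ‖x‖ ≤ 1}, ∀ x, (h x : E) = g ‖(x : E)‖ • (x : E) := by
  have hmaps : MapsTo (fun x : E ↦ g ‖x‖ • x) {x | ‖x‖ ≤ 1} {x | ‖x‖ ≤ 1} := fun x hx ↦ by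
    simpa only [mem_ofPred_eq, norm_radial_smul hg hx] using hle _ ⟨norm_nonneg x, hx⟩
  have hbij : BijOn (fun x : E ↦ g ‖x‖ • x) {x | ‖x‖ ≤ 1} {x | ‖x‖ ≤ 1} :=
    ⟨hmaps, radial_smul_injOn hg hinj, radial_smul_surjOn hcont.continuousOn hone⟩
  have hcont' : Continuous (hbij.equiv _) :=
    ((hcont.comp continuous_norm).smul continuous_id).restrict hmaps
  have : CompactSpace {x : E | ‖x‖ ≤ 1} := isCompact_iff_compactSpace.mp <| by
    simpa only [Metric.closedBall, dist_zero_right] using isCompact_closedBall (0 : E) 1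
  exact ⟨hcont'.homeoOfEquivCompactToT2, fun _ ↦ rfl⟩

end RadialMap

namespace Fm

noncomputable section

def base (m : ℕ) (r : ℝ) : ℝ := ((m : ℝ) - 1) * r ^ 2 + ((m : ℝ) + 1)

def denom (m : ℕ) (r : ℝ) : ℝ := base m r + √(base m r ^ 2 - 4 * (m : ℝ) ^ 2 * r ^ 2)

def scale (m : ℕ) (r : ℝ) : ℝ := 2 * m / denom m r

end

variable {m : ℕ} {r : ℝ}

theorem eq_scale_smul (m : ℕ) (a : ℂ) : Fm m a = scale m ‖a‖ • a := by
  rw [Fm, scale, denom, base, Complex.real_smul, Complex.ofReal_div]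
  push_cast
  ring

theorem base_pos (hm : 1 ≤ m) (r : ℝ) : 0 < base m r := by
  have : (1 : ℝ) ≤ m := by exact_mod_cast hm
  unfold base; nlinarith [sq_nonneg r]

theorem denom_pos (hm : 1 ≤ m) (r : ℝ) : 0 < denom m r :=
  add_pos_of_pos_of_nonneg (base_pos hm r) (Real.sqrt_nonneg _)

theorem scale_pos (hm : 1 ≤ m) (r : ℝ) : 0 < scale m r := by
  have : (0 : ℝ) < m := by exact_mod_cast hm
  exact div_pos (by positivity) (denom_pos hm r)

theorem continuous_scale (hm : 1 ≤ m) : Continuous (scale m) :=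
  continuous_const.div (by unfold denom base; fun_prop) fun r ↦ (denom_pos hm r).ne'

theorem radicand_nonneg (hm : 1 ≤ m) (hr : r ^ 2 ≤ 1) :
    0 ≤ base m r ^ 2 - 4 * (m : ℝ) ^ 2 * r ^ 2 := by
  have : (1 : ℝ) ≤ m := by exact_mod_cast hm
  have hfactor : base m r ^ 2 - 4 * (m : ℝ) ^ 2 * r ^ 2
      = (1 - r ^ 2) * (((m : ℝ) + 1) ^ 2 - ((m : ℝ) - 1) ^ 2 * r ^ 2) := by
    unfold base; ring
  rw [hfactor]
  exact mul_nonneg (by linarith) (by nlinarith [sq_nonneg ((m : ℝ) - 1)])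

theorem scale_one (hm : 1 ≤ m) : scale m 1 = 1 := by
  have : (0 : ℝ) < m := by exact_mod_cast hm
  have hbase : base m 1 = 2 * m := by unfold base; ring
  rw [scale, denom, hbase, show (2 * m : ℝ) ^ 2 - 4 * m ^ 2 * 1 ^ 2 = 0 by ring,
    Real.sqrt_zero, add_zero, div_self (by positivity)]

theorem mul_scale_le_one (hm : 1 ≤ m) (hr : r ∈ Icc (0 : ℝ) 1) : r * scale m r ≤ 1 := by
  obtain ⟨hr0, hr1⟩ := hr
  have hrad := radicand_nonneg hm (r := r) (by nlinarith)
  have hbase : 2 * m * r ≤ base m r := by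
    nlinarith [base_pos hm r, sq_nonneg (base m r - 2 * m * r)]
  rw [scale, mul_div_assoc', div_le_one (denom_pos hm r), denom]
  linarith [Real.sqrt_nonneg (base m r ^ 2 - 4 * (m : ℝ) ^ 2 * r ^ 2)]

theorem quadratic_mul_scale (hm : 1 ≤ m) (hr : r ^ 2 ≤ 1) :
    m * r * ((r * scale m r) ^ 2 + 1) = base m r * (r * scale m r) := by
  have hsq := Real.sq_sqrt (radicand_nonneg hm hr)
  have hd := (denom_pos hm r).ne'
  rw [scale]
  field_simp
  unfold denom at *
  linear_combination r * hsq

theorem injOn_mul_scale (hm : 1 ≤ m) : InjOn (fun r ↦ r * scale m r) (Icc 0 1) := by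
  intro r₁ ⟨h₁0, h₁1⟩ r₂ ⟨h₂0, h₂1⟩ (heq : r₁ * scale m r₁ = r₂ * scale m r₂)
  have hM : (1 : ℝ) ≤ m := by exact_mod_cast hm
  have e₁ := quadratic_mul_scale hm (r := r₁) (by nlinarith)
  have e₂ := quadratic_mul_scale hm (r := r₂) (by nlinarith)
  rw [← heq] at e₂
  set t := r₁ * scale m r₁
  have ht : 0 ≤ t := mul_nonneg h₁0 (scale_pos hm r₁).le
  have hfactor : (r₁ - r₂) * (m * (t ^ 2 + 1) - ((m : ℝ) - 1) * t * (r₁ + r₂)) = 0 := by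
    unfold base at e₁ e₂; linear_combination e₁ - e₂
  -- `m (t² + 1) - (m - 1) t (r₁ + r₂) ≥ m (t - 1)² + 2t > 0`
  have hpos : 0 < m * (t ^ 2 + 1) - ((m : ℝ) - 1) * t * (r₁ + r₂) := by
    nlinarith [mul_nonneg (by linarith : (0 : ℝ) ≤ m) (sq_nonneg (t - 1)),
      mul_nonneg (mul_nonneg (by linarith : (0 : ℝ) ≤ m - 1) ht)
        (by linarith : (0 : ℝ) ≤ 2 - (r₁ + r₂))]
  linarith [(mul_eq_zero.mp hfactor).resolve_right hpos.ne']

theorem scale_one_eq (r : ℝ) : scale 1 r = 1 / (1 + √(1 - r ^ 2)) := by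
  have hbase : base 1 r = 2 := by unfold base; norm_num
  have hsqrt : √(base 1 r ^ 2 - 4 * ((1 : ℕ) : ℝ) ^ 2 * r ^ 2) = 2 * √(1 - r ^ 2) := by
    rw [hbase, show (2 : ℝ) ^ 2 - 4 * ((1 : ℕ) : ℝ) ^ 2 * r ^ 2 = 2 ^ 2 * (1 - r ^ 2) by
      push_cast; ring, Real.sqrt_mul (by positivity), Real.sqrt_sq zero_le_two]
  have hpos : 0 < 1 + √(1 - r ^ 2) := by positivity
  rw [scale, denom, hsqrt, hbase, div_eq_div_iff (by positivity) hpos.ne']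
  push_cast; ring

end Fm

/-- For every integer `m ≥ 1`, the map `F_m` restricts to a homeomorphism
of the closed unit disc onto itself, fixing the unit circle pointwise; for `m = 1`
it is the map `a ↦ a/(1 + √(1 − |a|²))`. -/
theorem stmt9 (m : ℕ) (hm : 1 ≤ m) :
    (∃ h : ({a : ℂ // ‖a‖ ≤ 1}) ≃ₜ ({a : ℂ // ‖a‖ ≤ 1}),
      ∀ x : {a : ℂ // ‖a‖ ≤ 1}, (h x : ℂ) = Fm m (x : ℂ)) ∧
    (∀ a : ℂ, ‖a‖ = 1 → Fm m a = a) ∧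
    (∀ a : ℂ, ‖a‖ ≤ 1 → Fm 1 a = a / ((1 + Real.sqrt (1 - ‖a‖ ^ 2) : ℝ) : ℂ)) := by
  refine ⟨?_, fun a ha ↦ ?_, fun a _ ↦ ?_⟩
  · obtain ⟨h, hh⟩ := exists_homeomorph_closedUnitBall_radial (E := ℂ)
      (fun r _ ↦ Fm.scale_pos hm r) (Fm.continuous_scale hm) (Fm.scale_one hm)
      (fun r hr ↦ Fm.mul_scale_le_one hm hr) (Fm.injOn_mul_scale hm)
    exact ⟨h, fun x ↦ (hh x).trans (Fm.eq_scale_smul m x).symm⟩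
  · rw [Fm.eq_scale_smul, ha, Fm.scale_one hm, one_smul]
  · rw [Fm.eq_scale_smul, Fm.scale_one_eq, Complex.real_smul, Complex.ofReal_div,
      Complex.ofReal_one, one_div, div_eq_mul_inv, mul_comm]
end

section
/- Let g_n, g : 𝔻 → ℂ be injective holomorphic functions such that g_n → g locally uniformly on 𝔻. Let (z_n), (w_n) be sequences in 𝔻 and z₀, w₀ ∈ 𝔻 such that g_n(z_n) → g(z₀) and g_n(w_n) → g(w₀). Then z_n → z₀, w_n → w₀, and the pseudo-hyperbolic distances converge: ρ(z_n, w_n) → ρ(z₀, w₀). -/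
/-!
Fix a small closed disc `closedBall z₀ r` in `𝔻`. Since `g` is injective, `‖g x - g z₀‖` is
bounded below by some `ε > 0` on the circle `sphere z₀ r`, and by uniform convergence the same
holds for `g n` with `ε / 2` once `n` is large. The maximum principle then shows that `g n` maps
the disc onto a neighbourhood of `g n z₀` containing `g n (z n)`, and injectivity of `g n` forces
`z n` into the disc. Convergence of the pseudo-hyperbolic distances follows by continuity.
-/

open Filter Metric Set Topology

lemma exists_pos_le_dist_on_sphere {X Y : Type*} [MetricSpace X] [ProperSpace X]
    [MetricSpace Y] {f : X → Y} {U : Set X} {c : X} {r : ℝ}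
    (hf : ContinuousOn f U) (hinj : InjOn f U) (hc : c ∈ U) (hr : 0 < r)
    (hsub : sphere c r ⊆ U) :
    ∃ ε > 0, ∀ x ∈ sphere c r, ε ≤ dist (f x) (f c) :=
  (isCompact_sphere c r).exists_forall_le'
    (continuous_dist.comp_continuousOn ((hf.mono hsub).prodMk continuousOn_const))
    fun _ hx => dist_pos.mpr fun h => ne_of_mem_sphere hx hr.ne' (hinj (hsub hx) hc h)

lemma mem_closedBall_of_dist_lt_half {F : ℂ → ℂ} {U : Set ℂ} {c y : ℂ} {r ε : ℝ}
    (hF : DifferentiableOn ℂ F U) (hinj : InjOn F U) (hr : 0 < r) (hsub : closedBall c r ⊆ U)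
    (hsph : ∀ x ∈ sphere c r, ε ≤ dist (F x) (F c)) (hy : y ∈ U)
    (hFy : dist (F y) (F c) < ε / 2) :
    y ∈ closedBall c r := by
  have hc : c ∈ U := hsub (mem_closedBall_self hr.le)
  have hnonconst : ∃ᶠ x in 𝓝 c, F x ≠ F c := by
    have : ∀ᶠ x in 𝓝[≠] c, F x ≠ F c := by
      filter_upwards [nhdsWithin_le_nhds (mem_of_superset (closedBall_mem_nhds c hr) hsub),
        self_mem_nhdsWithin] with x hxU hxc
      exact fun h => hxc (hinj hxU hc h)
    exact this.frequently.filter_mono nhdsWithin_le_nhds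
  obtain ⟨x, hx, hxy⟩ := (hF.diffContOnCl_ball hsub).ball_subset_image_closedBall hr
    (by simpa only [dist_eq_norm] using hsph) hnonconst (mem_ball.mpr hFy)
  rwa [← hinj (hsub hx) hy hxy]

lemma tendsto_of_tendstoLocallyUniformlyOn_of_injOn {ι : Type*} {l : Filter ι}
    {F : ι → ℂ → ℂ} {f : ℂ → ℂ} {U : Set ℂ} (hU : IsOpen U)
    (hF : ∀ i, DifferentiableOn ℂ (F i) U) (hFinj : ∀ i, InjOn (F i) U)
    (hf : ContinuousOn f U) (hfinj : InjOn f U) (hconv : TendstoLocallyUniformlyOn F f l U)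
    {z : ι → ℂ} (hz : ∀ i, z i ∈ U) {x₀ : ℂ} (hx₀ : x₀ ∈ U)
    (hFz : Tendsto (fun i => F i (z i)) l (𝓝 (f x₀))) :
    Tendsto z l (𝓝 x₀) := by
  rw [Metric.tendsto_nhds]
  intro δ hδ
  obtain ⟨ρ, hρ, hρU⟩ := nhds_basis_closedBall.mem_iff.mp (hU.mem_nhds hx₀)
  set r := min ρ (δ / 2)
  have hr : 0 < r := lt_min hρ (half_pos hδ)
  have hsub : closedBall x₀ r ⊆ U := (closedBall_subset_closedBall (min_le_left _ _)).trans hρU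
  obtain ⟨ε, hε, hsph⟩ := exists_pos_le_dist_on_sphere hf hfinj hx₀ hr
    (sphere_subset_closedBall.trans hsub)
  have hunif : TendstoUniformlyOn F f l (closedBall x₀ r) :=
    (tendstoLocallyUniformlyOn_iff_tendstoUniformlyOn_of_compact (isCompact_closedBall x₀ r)).mp
      (hconv.mono hsub)
  filter_upwards [Metric.tendstoUniformlyOn_iff.mp hunif (ε / 8) (by positivity),
    Metric.tendsto_nhds.mp hFz (ε / 8) (by positivity)] with i hFi hzi
  have hcentre : dist (f x₀) (F i x₀) < ε / 8 := hFi x₀ (mem_closedBall_self hr.le)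
  have hsphi : ∀ x ∈ sphere x₀ r, ε / 2 ≤ dist (F i x) (F i x₀) := by
    intro x hx
    have := hFi x (sphere_subset_closedBall hx)
    have := dist_triangle4 (f x) (F i x) (F i x₀) (f x₀)
    linarith [hsph x hx, dist_comm (F i x₀) (f x₀)]
  have hclose : dist (F i (z i)) (F i x₀) < ε / 2 / 2 := by
    linarith [dist_triangle (F i (z i)) (f x₀) (F i x₀)]
  calc dist (z i) x₀ ≤ r :=
        mem_closedBall.mp (mem_closedBall_of_dist_lt_half (hF i) (hFinj i) hr hsub hsphi (hz i)
          hclose)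
    _ ≤ δ / 2 := min_le_right _ _
    _ < δ := half_lt_self hδ

noncomputable def pseudoHyperbolicDist (z w : ℂ) : ℝ :=
  ‖z - w‖ / ‖1 - (starRingEnd ℂ) w * z‖

lemma one_sub_conj_mul_ne_zero_s13 {z w : ℂ} (hz : ‖z‖ < 1) (hw : ‖w‖ < 1) :
    1 - (starRingEnd ℂ) w * z ≠ 0 := by
  rw [sub_ne_zero]
  intro h
  have := congrArg norm h
  rw [norm_one, norm_mul, Complex.norm_conj] at this
  nlinarith [norm_nonneg z, norm_nonneg w]

lemma continuousAt_pseudoHyperbolicDist {z w : ℂ} (hz : ‖z‖ < 1) (hw : ‖w‖ < 1) :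
    ContinuousAt (fun p : ℂ × ℂ => pseudoHyperbolicDist p.1 p.2) (z, w) :=
  ContinuousAt.div (continuous_fst.sub continuous_snd).norm.continuousAt
    (continuous_const.sub ((Complex.continuous_conj.comp continuous_snd).mul
      continuous_fst)).norm.continuousAt
    (norm_ne_zero_iff.mpr (one_sub_conj_mul_ne_zero_s13 hz hw))

/-- Let `g n, g : 𝔻 → ℂ` be injective holomorphic functions with
`g n → g` locally uniformly on `𝔻`. Let `(z n), (w n)` be sequences in `𝔻` and
`z₀, w₀ ∈ 𝔻` with `g n (z n) → g z₀` and `g n (w n) → g w₀`. Then `z n → z₀`,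
`w n → w₀`, and the pseudo-hyperbolic distances `ρ(z n, w n)` converge to `ρ(z₀, w₀)`. -/
theorem stmt13 (g : ℕ → ℂ → ℂ) (glim : ℂ → ℂ)
    (hhol : ∀ n, DifferentiableOn ℂ (g n) {z : ℂ | ‖z‖ < 1})
    (hinj : ∀ n, Set.InjOn (g n) {z : ℂ | ‖z‖ < 1})
    (hhollim : DifferentiableOn ℂ glim {z : ℂ | ‖z‖ < 1})
    (hinjlim : Set.InjOn glim {z : ℂ | ‖z‖ < 1})
    (hconv : TendstoLocallyUniformlyOn g glim atTop {z : ℂ | ‖z‖ < 1})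
    (z w : ℕ → ℂ) (hz : ∀ n, ‖z n‖ < 1) (hw : ∀ n, ‖w n‖ < 1)
    (z₀ w₀ : ℂ) (hz₀ : ‖z₀‖ < 1) (hw₀ : ‖w₀‖ < 1)
    (hgz : Tendsto (fun n => g n (z n)) atTop (nhds (glim z₀)))
    (hgw : Tendsto (fun n => g n (w n)) atTop (nhds (glim w₀))) :
    Tendsto z atTop (nhds z₀) ∧ Tendsto w atTop (nhds w₀) ∧
      Tendsto (fun n => ‖z n - w n‖ / ‖1 - (starRingEnd ℂ) (w n) * z n‖) atTop
        (nhds (‖z₀ - w₀‖ / ‖1 - (starRingEnd ℂ) w₀ * z₀‖)) := by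
  have hdisc : IsOpen {z : ℂ | ‖z‖ < 1} := isOpen_lt continuous_norm continuous_const
  have htz : Tendsto z atTop (𝓝 z₀) := tendsto_of_tendstoLocallyUniformlyOn_of_injOn hdisc hhol
    hinj hhollim.continuousOn hinjlim hconv hz hz₀ hgz
  have htw : Tendsto w atTop (𝓝 w₀) := tendsto_of_tendstoLocallyUniformlyOn_of_injOn hdisc hhol
    hinj hhollim.continuousOn hinjlim hconv hw hw₀ hgw
  exact ⟨htz, htw, ((continuousAt_pseudoHyperbolicDist hz₀ hw₀).tendsto.comp
    (htz.prodMk_nhds htw) :)⟩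
end
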